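/- For α ∈ (1,2) and fixed v ≠ 0, the function v ↦ (2^{α/2} v/√π) Γ((α+1)/2) ₁F₁((2-α)/2; 3/2; v²/2) grows faster than any polynomial as |v| → ∞; in particular it is not Lipschitz continuous on ℝ. -/

import Mathlib

open Real Filter

/-- The Kummer confluent hypergeometric function ₁F₁(a; b; z), defined by its
power series with rising factorials (Pochhammer symbols). -/
noncomputable def kummer (a b z : ℝ) : ℝ :=
  ∑' n : ℕ, ((ascPochhammer ℝ n).eval a / (ascPochhammer ℝ n).eval b) * z ^ n / n.factorial

/-- The one-dimensional drift function for the Gaussian kinetic energy. -/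
noncomputable def driftC (α v : ℝ) : ℝ :=
  (2 : ℝ) ^ (α / 2) * v / Real.sqrt Real.pi * Real.Gamma ((α + 1) / 2)
    * kummer ((2 - α) / 2) (3 / 2) (v ^ 2 / 2)

/-! For `0 < a ≤ b` every Taylor coefficient of `₁F₁(a; b; ·)` is positive, so for `z ≥ 0` the
series dominates each of its terms: `₁F₁(a; b; v²/2) ≥ c_n v^{2n}` with `c_n > 0`. Multiplying by
`v`, the drift beats `v^n` for every `n` (the exponential growth of `₁F₁` is not needed). A
Lipschitz function on `ℝ` grows at most linearly, which rules out Lipschitz continuity. -/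

theorem ascPochhammer_eval_le_eval {S : Type*} [Semiring S] [PartialOrder S]
    [IsStrictOrderedRing S] {a b : S} (ha : 0 < a) (hab : a ≤ b) (n : ℕ) :
    (ascPochhammer S n).eval a ≤ (ascPochhammer S n).eval b := by
  induction n with
  | zero => simp
  | succ n ih =>
    rw [ascPochhammer_succ_eval, ascPochhammer_succ_eval]
    exact mul_le_mul ih (add_le_add_left hab _) (by positivity)
      (ascPochhammer_pos n b (ha.trans_le hab)).le

theorem not_lipschitzWith_of_tendsto_abs_div_atTop {f : ℝ → ℝ}
    (hf : Tendsto (fun v => |f v| / v) atTop atTop) (K : NNReal) : ¬ LipschitzWith K f := by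
  intro hK
  obtain ⟨v, hv_large, hv_one⟩ :=
    ((hf.eventually_gt_atTop (|f 0| + K)).and (eventually_ge_atTop (1 : ℝ))).exists
  have hv : 0 < v := one_pos.trans_le hv_one
  have hlin : |f v| ≤ |f 0| + K * v := by
    have := hK.dist_le_mul v 0
    rw [Real.dist_eq, Real.dist_eq, sub_zero, abs_of_pos hv] at this
    linarith [abs_sub_abs_le_abs_sub (f v) (f 0)]
  rw [lt_div_iff₀ hv] at hv_large
  nlinarith [abs_nonneg (f 0)]

section Kummer

variable {a b z : ℝ}

noncomputable def kummerTerm (a b z : ℝ) (n : ℕ) : ℝ :=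
  ((ascPochhammer ℝ n).eval a / (ascPochhammer ℝ n).eval b) * z ^ n / n.factorial

theorem kummerTerm_nonneg (ha : 0 < a) (hb : 0 < b) (hz : 0 ≤ z) (n : ℕ) :
    0 ≤ kummerTerm a b z n := by
  have := ascPochhammer_pos n a ha
  have := ascPochhammer_pos n b hb
  unfold kummerTerm
  positivity

theorem kummerTerm_le_pow_div_factorial (ha : 0 < a) (hab : a ≤ b) (hz : 0 ≤ z) (n : ℕ) :
    kummerTerm a b z n ≤ z ^ n / n.factorial := by
  have hratio : (ascPochhammer ℝ n).eval a / (ascPochhammer ℝ n).eval b ≤ 1 :=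
    div_le_one_of_le₀ (ascPochhammer_eval_le_eval ha hab n)
      (ascPochhammer_pos n b (ha.trans_le hab)).le
  unfold kummerTerm
  gcongr
  exact mul_le_of_le_one_left (pow_nonneg hz n) hratio

theorem summable_kummerTerm (ha : 0 < a) (hab : a ≤ b) (hz : 0 ≤ z) :
    Summable (kummerTerm a b z) :=
  (Real.summable_pow_div_factorial z).of_nonneg_of_le
    (kummerTerm_nonneg ha (ha.trans_le hab) hz) (kummerTerm_le_pow_div_factorial ha hab hz)

theorem kummerTerm_le_kummer (ha : 0 < a) (hab : a ≤ b) (hz : 0 ≤ z) (n : ℕ) :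
    kummerTerm a b z n ≤ kummer a b z :=
  (summable_kummerTerm ha hab hz).le_tsum n
    fun m _ => kummerTerm_nonneg ha (ha.trans_le hab) hz m

theorem tendsto_mul_kummer_div_pow_atTop (ha : 0 < a) (hab : a ≤ b) (n : ℕ) :
    Tendsto (fun v => v * kummer a b (v ^ 2 / 2) / v ^ n) atTop atTop := by
  set c : ℝ := (ascPochhammer ℝ n).eval a / (ascPochhammer ℝ n).eval b / n.factorial / 2 ^ n
  have hc : 0 < c := by
    have := ascPochhammer_pos n a ha
    have := ascPochhammer_pos n b (ha.trans_le hab)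
    positivity
  refine tendsto_atTop_mono' atTop ?_
    ((tendsto_pow_atTop n.succ_ne_zero).const_mul_atTop hc)
  filter_upwards [eventually_gt_atTop 0] with v hv
  have hterm : kummerTerm a b (v ^ 2 / 2) n = c * v ^ n * v ^ n := by
    simp only [kummerTerm, c, div_pow]
    ring
  rw [le_div_iff₀ (pow_pos hv n)]
  calc c * v ^ (n + 1) * v ^ n = v * kummerTerm a b (v ^ 2 / 2) n := by rw [hterm]; ring
    _ ≤ v * kummer a b (v ^ 2 / 2) :=
      mul_le_mul_of_nonneg_left (kummerTerm_le_kummer ha hab (by positivity) n) hv.le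

end Kummer

theorem driftC_eq (α v : ℝ) :
    driftC α v = 2 ^ (α / 2) / √π * Gamma ((α + 1) / 2)
      * (v * kummer ((2 - α) / 2) (3 / 2) (v ^ 2 / 2)) := by
  unfold driftC
  ring

theorem stmt_8 (α : ℝ) (hα : α ∈ Set.Ioo 1 2) :
    (∀ n : ℕ, Filter.Tendsto (fun v : ℝ => |driftC α v| / v ^ n) Filter.atTop Filter.atTop) ∧
      ∀ K : NNReal, ¬ LipschitzWith K (driftC α) := by
  obtain ⟨hα1, hα2⟩ := hα
  have hC : 0 < 2 ^ (α / 2) / √π * Gamma ((α + 1) / 2) := by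
    have := Gamma_pos_of_pos (s := (α + 1) / 2) (by linarith)
    positivity
  have hgrowth (n : ℕ) : Tendsto (fun v : ℝ => |driftC α v| / v ^ n) atTop atTop := by
    refine tendsto_atTop_mono' atTop ?_ ((tendsto_mul_kummer_div_pow_atTop
      (a := (2 - α) / 2) (b := 3 / 2) (by linarith) (by linarith) n).const_mul_atTop hC)
    filter_upwards [eventually_gt_atTop 0] with v hv
    rw [driftC_eq, ← mul_div_assoc]
    exact div_le_div_of_nonneg_right (le_abs_self _) (pow_pos hv n).le
  refine ⟨hgrowth, not_lipschitzWith_of_tendsto_abs_div_atTop ?_⟩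
  simpa only [pow_one] using hgrowth 1
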